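/- Let n = km > 1 be a spoof odd perfect number with m composite, and let s be the positive integer with s² = k (which exists since k is an odd perfect square). Then 3/√5 < σ(s)/s < 2. -/

import Mathlib

open ArithmeticFunction
open scoped ArithmeticFunction.sigma

/-! With `k = s ^ 2`, the spoof equation says `σ(k) / k = 2m / (m + 1)`, which lies in `[9/5, 2)`
because an odd composite `m` is at least `9`. The divisors `s * d` (`d ∣ s`) of `s ^ 2` give
`s σ(s) ≤ σ(s ^ 2)`, hence `σ(s) / s < 2`. Every divisor of `s ^ 2` is a product of two divisors
of `s`, and `(1, s)`, `(s, 1)` give the same product, so `σ(s ^ 2) + s ≤ σ(s) ^ 2`; hence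
`(σ(s) / s) ^ 2 > 9/5`. -/

theorem mul_sigma_one_le_sigma_one_mul (m n : ℕ) : m * σ 1 n ≤ σ 1 (m * n) := by
  rcases Nat.eq_zero_or_pos m with rfl | hm
  · simp
  calc m * σ 1 n = ∑ e ∈ n.divisors.image (m * ·), e := by
        rw [Finset.sum_image fun _ _ _ _ h => Nat.eq_of_mul_eq_mul_left hm h, sigma_one_apply,
          Finset.mul_sum]
    _ ≤ σ 1 (m * n) := by
      rw [sigma_one_apply]
      refine Finset.sum_le_sum_of_subset fun e he => ?_
      obtain ⟨d, hd, rfl⟩ := Finset.mem_image.mp he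
      obtain ⟨hdn, hn⟩ := Nat.mem_divisors.mp hd
      exact Nat.mem_divisors.mpr ⟨Nat.mul_dvd_mul_left m hdn, mul_ne_zero hm.ne' hn⟩

theorem sigma_one_sq_add_le_sq (s : ℕ) (hs : 1 < s) : σ 1 (s ^ 2) + s ≤ σ 1 s ^ 2 := by
  set P := (s.divisors ×ˢ s.divisors).erase (1, s)
  have hP : (s ^ 2).divisors = P.image fun p => p.1 * p.2 := by
    ext e
    simp only [sq, Nat.divisors_mul, Finset.mem_mul, Finset.mem_image, P, Finset.mem_erase,
      Finset.mem_product, Prod.exists]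
    constructor
    · rintro ⟨a, ha, b, hb, rfl⟩
      by_cases hab : (a, b) = (1, s)
      · obtain ⟨rfl, rfl⟩ := Prod.mk.inj hab
        refine ⟨b, 1, ⟨fun h => hs.ne' (congrArg Prod.fst h), hb, ?_⟩, mul_comm b 1⟩
        exact Nat.one_mem_divisors.mpr (by omega)
      · exact ⟨a, b, ⟨hab, ha, hb⟩, rfl⟩
    · rintro ⟨a, b, ⟨-, ha, hb⟩, rfl⟩
      exact ⟨a, ha, b, hb, rfl⟩
  have hmem : ((1, s) : ℕ × ℕ) ∈ s.divisors ×ˢ s.divisors :=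
    Finset.mem_product.mpr ⟨Nat.one_mem_divisors.mpr (by omega), Nat.mem_divisors_self s (by omega)⟩
  calc σ 1 (s ^ 2) + s ≤ (∑ p ∈ P, p.1 * p.2) + 1 * s := by
        rw [sigma_one_apply, hP, one_mul]
        gcongr
        exact Finset.sum_image_le_of_nonneg fun _ _ => Nat.zero_le _
    _ = σ 1 s ^ 2 := by
        rw [Finset.sum_erase_add _ _ hmem, sigma_one_apply, sq, Finset.sum_mul_sum,
          Finset.sum_product]

theorem Nat.nine_le_of_odd_of_not_prime {m : ℕ} (hm : 1 < m) (hodd : Odd m)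
    (hcomp : ¬ m.Prime) : 9 ≤ m := by
  by_contra! hlt
  interval_cases m <;> revert hodd hcomp <;> decide

theorem three_div_sqrt_five_lt_div {a b : ℝ} (ha : 0 ≤ a) (hb : 0 < b)
    (h : 9 * b ^ 2 < 5 * a ^ 2) : 3 / √5 < a / b := by
  have hsqrt : 3 / √5 = √(9 / 5) := by
    rw [Real.sqrt_div' _ (by norm_num), show (9 : ℝ) = 3 ^ 2 by norm_num, Real.sqrt_sq (by norm_num)]
  have ha' : 0 < a := by nlinarith
  rw [hsqrt, Real.sqrt_lt' (div_pos ha' hb), div_pow, lt_div_iff₀ (by positivity)]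
  linarith

theorem stmt_5_general (k m s : ℕ) (hk : 1 < k) (hm : 1 < m) (hodd : Odd (k * m))
    (hspoof : σ 1 k * (m + 1) = 2 * (k * m)) (hcomp : ¬ m.Prime)
    (hsq : s ^ 2 = k) :
    3 / Real.sqrt 5 < (σ 1 s : ℝ) / (s : ℝ) ∧ (σ 1 s : ℝ) / (s : ℝ) < 2 := by
  have hs : 1 < s := by nlinarith
  have hm9 : 9 ≤ m := Nat.nine_le_of_odd_of_not_prime hm (Nat.odd_mul.mp hodd).2 hcomp
  have hlower : 9 * k ≤ 5 * σ 1 k := by nlinarith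
  have hupper : σ 1 k < 2 * k := by nlinarith
  have hsq_lt : 9 * s ^ 2 < 5 * σ 1 s ^ 2 := by
    have := sigma_one_sq_add_le_sq s hs
    rw [hsq] at this ⊢
    omega
  have hmul_lt : s * σ 1 s < 2 * (s * s) := by
    have := mul_sigma_one_le_sigma_one_mul s s
    rw [← sq, hsq] at this ⊢
    omega
  have hsR : (0 : ℝ) < s := by positivity
  constructor
  · exact three_div_sqrt_five_lt_div (by positivity) hsR (by exact_mod_cast hsq_lt)
  · rw [div_lt_iff₀ hsR]
    exact_mod_cast Nat.lt_of_mul_lt_mul_left (a := s) (by linarith)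

theorem stmt_5 (k m s : ℕ) (hk : 1 < k) (hm : 1 < m) (hodd : Odd (k * m))
    (hspoof : σ 1 k * (m + 1) = 2 * (k * m)) (hcomp : ¬ m.Prime)
    (hs : 0 < s) (hsq : s ^ 2 = k) :
    3 / Real.sqrt 5 < (σ 1 s : ℝ) / (s : ℝ) ∧ (σ 1 s : ℝ) / (s : ℝ) < 2 :=
  stmt_5_general k m s hk hm hodd hspoof hcomp hsq
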